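/- (Proposition 2: the angles ω n are alternately acute and obtuse.) Let n be a natural number and let A, B, C be points of the Euclidean plane EuclideanSpace ℝ (Fin 2) with dist A B = p n, dist A C = p n and dist B C = q n. If n is even, then the angle ∠ B A C (EuclideanGeometry.angle B A C) is acute, i.e. ∠ B A C < π / 2; if n is odd, then ∠ B A C is obtuse, i.e. π / 2 < ∠ B A C. -/
import Mathlib


mutual
/-- The Pythagorean side numbers. -/
def p : ℕ → ℕ
  | 0 => 1
  | n + 1 => p n + q n
/-- The Pythagorean diameter numbers. -/
def q : ℕ → ℕ
  | 0 => 1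
  | n + 1 => 2 * p n + q n
end

open EuclideanGeometry

lemma p_pos' : ∀ n, 0 < p n
  | 0 => by simp [p]
  | n + 1 => by simp only [p]; exact Nat.lt_of_lt_of_le (p_pos' n) (Nat.le_add_right _ _)

lemma pq_key : ∀ n : ℕ, (Even n → 2 * (p n)^2 = (q n)^2 + 1) ∧
    (Odd n → (q n)^2 = 2 * (p n)^2 + 1)
  | 0 => by constructor <;> intro h <;> simp [p, q] at *
  | n + 1 => by
    obtain ⟨he, ho⟩ := pq_key n
    constructor
    · intro h
      have hn : Odd n := by simpa [Nat.even_add_one] using h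
      have := ho hn
      simp only [p, q]; nlinarith [this]
    · intro h
      have hn : Even n := by simpa [Nat.odd_add_one] using h
      have := he hn
      simp only [p, q]; nlinarith [this]

/-- Proposition 2: the apex angle of the isosceles triangle with legs `p n` and base `q n`
is acute for even `n` and obtuse for odd `n`. -/
theorem omega_acute_obtuse (n : ℕ) (A B C : EuclideanSpace ℝ (Fin 2))
    (hAB : dist A B = (p n : ℝ)) (hAC : dist A C = (p n : ℝ))
    (hBC : dist B C = (q n : ℝ)) :
    (Even n → ∠ B A C < Real.pi / 2) ∧ (Odd n → Real.pi / 2 < ∠ B A C) := by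
  have hlaw := EuclideanGeometry.law_cos B A C
  rw [dist_comm B A, dist_comm C A] at hlaw
  rw [hAB, hAC, hBC] at hlaw
  have hp : (0 : ℝ) < (p n : ℝ) := by exact_mod_cast p_pos' n
  have ha0 : 0 ≤ ∠ B A C := EuclideanGeometry.angle_nonneg B A C
  have haπ : ∠ B A C ≤ Real.pi := EuclideanGeometry.angle_le_pi B A C
  obtain ⟨he, ho⟩ := pq_key n
  constructor
  · intro h
    have key : 2 * ((p n : ℝ))^2 = ((q n : ℝ))^2 + 1 := by exact_mod_cast he h
    have hcos : 0 < Real.cos (∠ B A C) := by nlinarith [hlaw, key, hp]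
    by_contra hc
    push_neg at hc
    have : Real.cos (∠ B A C) ≤ 0 := by
      have := Real.cos_nonpos_of_pi_div_two_le_of_le hc (by linarith [Real.pi_pos])
      exact this
    linarith
  · intro h
    have key : ((q n : ℝ))^2 = 2 * ((p n : ℝ))^2 + 1 := by exact_mod_cast ho h
    have hcos : Real.cos (∠ B A C) < 0 := by nlinarith [hlaw, key, hp]
    by_contra hc
    push_neg at hc
    have : 0 ≤ Real.cos (∠ B A C) :=
      Real.cos_nonneg_of_mem_Icc ⟨by linarith [Real.pi_pos], hc⟩
    linarith
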